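/- arXiv:0711.0206 — 4 statements merged into one kernel-verified Lean document; each statement's English description precedes it below -/
import Mathlib

section
/- For any x in a vector space X₀ and any probability measure R on Z and measurable θ : Z → X₀, one has sup_{y ∈ Y₀} { ⟨y,x⟩ − log ∫_Z e^{⟨y,θ⟩} dR } = sup_{(a,y) ∈ ℝ × Y₀} { a + ⟨y,x⟩ − ∫_Z (e^{a + ⟨y,θ(z)⟩} − 1) R(dz) }, where both sides take values in (−∞, +∞]. -/
/-!
Writing the inner integral as `e^a · I` with `I = ∫ e^{⟨y,θ⟩} dR`, the supremum over `a` for fixed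
`y` is the Legendre identity `-log I = sup_a (a + 1 - I e^a)`, which also holds for `I = ∞` (both
sides are `-∞`); `I > 0` because `e^{⟨y,θ⟩} > 0` and `R ≠ 0`.
-/

open MeasureTheory ENNReal

theorem Real.add_one_sub_mul_exp_le_neg_log {b : ℝ} (hb : 0 < b) (a : ℝ) :
    a + 1 - b * Real.exp a ≤ -Real.log b := by
  have h := Real.add_one_le_exp (Real.log b + a)
  rw [Real.exp_add, Real.exp_log hb] at h
  linarith

theorem Real.add_one_sub_mul_exp_neg_log {b : ℝ} (hb : 0 < b) :
    -Real.log b + 1 - b * Real.exp (-Real.log b) = -Real.log b := by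
  rw [Real.exp_neg, Real.exp_log hb, mul_inv_cancel₀ hb.ne']
  ring

theorem EReal.iSup_add_sub_ofReal_exp_mul_sub_one {I : ℝ≥0∞} (hI : I ≠ 0) (c : ℝ) :
    ⨆ a : ℝ, (((a + c : ℝ) : EReal) - (((ENNReal.ofReal (Real.exp a) * I : ℝ≥0∞) : EReal) - 1))
      = (c : EReal) - ENNReal.log I := by
  rcases eq_or_ne I ⊤ with rfl | hI_top
  · have hexp_mul_top (a : ℝ) : ENNReal.ofReal (Real.exp a) * ⊤ = ⊤ :=
      ENNReal.mul_top (by simp [(Real.exp_pos a).not_ge])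
    have htop_sub_one : (⊤ : EReal) - 1 = ⊤ := EReal.top_sub_coe 1
    simp only [hexp_mul_top, EReal.coe_ennreal_top, htop_sub_one, ENNReal.log_top, EReal.sub_top,
      iSup_const]
  · set b := I.toReal
    have hb : 0 < b := ENNReal.toReal_pos hI hI_top
    have hterm (a : ℝ) :
        ((a + c : ℝ) : EReal) - (((ENNReal.ofReal (Real.exp a) * I : ℝ≥0∞) : EReal) - 1)
          = ((c + (a + 1 - b * Real.exp a) : ℝ) : EReal) := by
      rw [← ENNReal.ofReal_toReal hI_top, ← ENNReal.ofReal_mul (Real.exp_pos a).le,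
        EReal.coe_ennreal_ofReal, max_eq_left (by positivity)]
      norm_cast
      ring
    rw [iSup_congr hterm, ENNReal.log_pos_real hI hI_top, ← EReal.coe_sub, sub_eq_add_neg]
    refine le_antisymm (iSup_le fun a => ?_) ?_
    · exact EReal.coe_le_coe_iff.mpr (by linarith [Real.add_one_sub_mul_exp_le_neg_log hb a])
    · refine le_of_eq_of_le ?_ (le_iSup _ (-Real.log b))
      rw [Real.add_one_sub_mul_exp_neg_log hb]

theorem MeasureTheory.lintegral_ofReal_exp_const_add {α : Type*} [MeasurableSpace α]
    (μ : Measure α) (a : ℝ) (f : α → ℝ) :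
    ∫⁻ x, ENNReal.ofReal (Real.exp (a + f x)) ∂μ
      = ENNReal.ofReal (Real.exp a) * ∫⁻ x, ENNReal.ofReal (Real.exp (f x)) ∂μ := by
  simp_rw [Real.exp_add, ENNReal.ofReal_mul (Real.exp_pos a).le]
  exact lintegral_const_mul' _ _ ENNReal.ofReal_ne_top

theorem MeasureTheory.lintegral_ofReal_exp_ne_zero {α : Type*} [MeasurableSpace α]
    (μ : Measure α) [NeZero μ] {f : α → ℝ} (hf : Measurable f) :
    ∫⁻ x, ENNReal.ofReal (Real.exp (f x)) ∂μ ≠ 0 := by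
  refine ((lintegral_pos_iff_support (Real.measurable_exp.comp hf).ennreal_ofReal).mpr ?_).ne'
  rw [Function.support_eq_univ fun x => by simp [Real.exp_pos]]
  exact Measure.measure_univ_pos.mpr (NeZero.ne μ)

/-- The pairing `⟨·, x⟩` is the linear form `p`, and `⟨y, θ(·)⟩` is the function `B y`. -/
theorem stmt1 {Z : Type*} [MeasurableSpace Z] (R : Measure Z) [IsProbabilityMeasure R]
    {Y : Type*} [AddCommGroup Y] [Module ℝ Y]
    (p : Y →ₗ[ℝ] ℝ) (B : Y →ₗ[ℝ] (Z → ℝ)) (hB : ∀ y, Measurable (B y)) :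
    (⨆ y : Y, ((p y : EReal)
        - ENNReal.log (∫⁻ z, ENNReal.ofReal (Real.exp (B y z)) ∂ R)))
      = (⨆ q : ℝ × Y, (((q.1 + p q.2 : ℝ) : EReal)
        - (((∫⁻ z, ENNReal.ofReal (Real.exp (q.1 + B q.2 z)) ∂ R : ℝ≥0∞) : EReal) - 1)))
    ∧ ⊥ < (⨆ y : Y, ((p y : EReal)
        - ENNReal.log (∫⁻ z, ENNReal.ofReal (Real.exp (B y z)) ∂ R))) := by
  constructor
  · rw [iSup_prod, iSup_comm]
    refine iSup_congr fun y => ?_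
    simp_rw [lintegral_ofReal_exp_const_add]
    exact (EReal.iSup_add_sub_ofReal_exp_mul_sub_one (lintegral_ofReal_exp_ne_zero R (hB y)) _).symm
  · refine EReal.bot_lt_zero.trans_le (le_iSup_of_le 0 ?_)
    simp
end

section
/- Let f : X → (−∞,∞] be inf-compact and g : X → (−∞,∞] be lower semicontinuous on a Hausdorff topological vector space X. Then the inf-convolution f □ g, defined by (f □ g)(x) = inf{ f(u) + g(x − u) : u ∈ X }, is lower semicontinuous. -/
/-!
A function with compact sublevel sets on a Hausdorff space is lower semicontinuous, so
`(x, u) ↦ f u + g (x - u)` is lower semicontinuous. To see that its infimum over `u` stays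
above `c` near `x₀`, pick `c < b < (f □ g) x₀`: the tube lemma applied to the compact set
`{x₀} × {f ≤ b}` controls the points `u` with `f u ≤ b`, and the others already satisfy
`f u + g (x - u) ≥ f u > b`.
-/

open ENNReal

section Semicontinuity

variable {X U α : Type*} [TopologicalSpace X] [TopologicalSpace U]

theorem LowerSemicontinuous.of_isCompact_sublevel [T2Space X] [LinearOrder α] [OrderTop α]
    {f : X → α} (hf : ∀ c ≠ ⊤, IsCompact {x | f x ≤ c}) : LowerSemicontinuous f := by
  refine lowerSemicontinuous_iff_isClosed_preimage.2 fun c => ?_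
  rcases eq_or_ne c ⊤ with rfl | hc
  · simp
  · exact (hf c hc).isClosed

theorem LowerSemicontinuous.iInf_of_isCompact_sublevel_minorant
    [CompleteLinearOrder α] [DenselyOrdered α] {φ : X × U → α}
    (hφ : LowerSemicontinuous φ) (h : U → α) (hh : ∀ c ≠ ⊤, IsCompact {u | h u ≤ c})
    (hle : ∀ x u, h u ≤ φ (x, u)) : LowerSemicontinuous fun x => ⨅ u, φ (x, u) := by
  intro x₀ c hc
  obtain ⟨b, hcb, hb⟩ := exists_between hc
  have hsub : ({x₀} : Set X) ×ˢ {u | h u ≤ b} ⊆ φ ⁻¹' Set.Ioi b := by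
    rintro ⟨x, u⟩ ⟨rfl, -⟩
    exact hb.trans_le (iInf_le _ u)
  obtain ⟨V, W, hV, -, hx₀V, hKW, hVW⟩ := generalized_tube_lemma isCompact_singleton
    (hh b hb.ne_top) (lowerSemicontinuous_iff_isOpen_preimage.1 hφ b) hsub
  filter_upwards [hV.mem_nhds (hx₀V rfl)] with x hx
  refine hcb.trans_le (le_iInf fun u => ?_)
  by_cases hu : h u ≤ b
  · exact (hVW (Set.mk_mem_prod hx (hKW hu))).le
  · exact (not_le.1 hu).le.trans (hle x u)

end Semicontinuity

/-- If `f` is inf-compact and `g` is lower semicontinuous on a Hausdorff topological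
vector group, then the inf-convolution `x ↦ inf_u { f(u) + g(x − u) }` is lower
semicontinuous. -/
theorem stmt12 {X : Type*} [TopologicalSpace X] [T2Space X] [AddCommGroup X]
    [IsTopologicalAddGroup X]
    (f g : X → ℝ≥0∞)
    (hf : ∀ c : ℝ≥0∞, c ≠ ⊤ → IsCompact {x : X | f x ≤ c})
    (hg : LowerSemicontinuous g) :
    LowerSemicontinuous (fun x : X => ⨅ u : X, f u + g (x - u)) := by
  have hφ : LowerSemicontinuous fun p : X × X => f p.2 + g (p.1 - p.2) :=
    ((LowerSemicontinuous.of_isCompact_sublevel hf).comp continuous_snd).add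
      (hg.comp (continuous_fst.sub continuous_snd))
  exact hφ.iInf_of_isCompact_sublevel_minorant f hf fun _ _ => le_self_add
end

section
/- Let ρ be a finite Young function on a σ-finite measure space (Z, R). A continuous linear functional ℓ on the Orlicz space L_ρ is singular (i.e., for every u ∈ L_ρ there is a decreasing sequence of measurable sets A_n with R(⋂_n A_n) = 0 and ⟨ℓ, u·1_{Z∖A_n}⟩ = 0 for all n) if and only if ⟨ℓ, u⟩ = 0 for every u in the small Orlicz space E_ρ = { u : ∫ ρ(z, αu(z)) dR < ∞ for all α > 0 }. -/
/-!
If `ℓ` is singular and `u ∈ E_ρ`, then `∫ ρ(u/β)` is finite for every `β > 0`, so its mass on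
`A_n` tends to `0` as `A_n` decreases to a null set. Hence `1_{A_n} u` has Luxemburg norm at most
`β` for large `n`, while `ℓ u = ℓ (1_{A_n} u)`; so `|ℓ u| ≤ K β` for every `β`.

Conversely, every measurable `u` lies in `E_ρ` on each set of an increasing sequence `B_n` that
exhausts `Z` up to a null set: on a set of finite measure, thresholds `c_m` with summable
exceptional measures bound all the finite functions `ρ(m u)`, `m ∈ ℕ`, at once off a small set,
and monotonicity of `ρ` in `|s|` reduces arbitrary scales `α` to `⌈α⌉`. Then `A_n = Z \ B_n`
witnesses singularity. Since `ρ` is not assumed measurable in `z`, lower integrals are handled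
through measurable minorants with the same set integrals.
-/

open MeasureTheory ENNReal Filter Topology Set

section YoungFunction

variable {φ : ℝ → ℝ≥0∞}

theorem monotoneOn_Ici_of_convex_of_map_zero
    (hconvex : ∀ a b s t : ℝ, 0 ≤ a → 0 ≤ b → a + b = 1 →
      φ (a * s + b * t) ≤ ENNReal.ofReal a * φ s + ENNReal.ofReal b * φ t)
    (hzero : φ 0 = 0) : MonotoneOn φ (Ici 0) := by
  intro s (hs : 0 ≤ s) t _ hst
  rcases hst.eq_or_lt with rfl | hst
  · rfl
  have ht : 0 < t := hs.trans_lt hst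
  have hst' : s / t ≤ 1 := div_le_one_of_le₀ hst.le ht.le
  have hconv := hconvex (s / t) (1 - s / t) t 0 (div_nonneg hs ht.le) (sub_nonneg.2 hst')
    (add_sub_cancel _ _)
  calc φ s = φ (s / t * t + (1 - s / t) * 0) := by
        rw [div_mul_cancel₀ s ht.ne', mul_zero, add_zero]
    _ ≤ ENNReal.ofReal (s / t) * φ t := by simpa [hzero] using hconv
    _ ≤ φ t := mul_le_of_le_one_left' (ENNReal.ofReal_le_one.2 hst')

theorem apply_le_apply_of_abs_le
    (hconvex : ∀ a b s t : ℝ, 0 ≤ a → 0 ≤ b → a + b = 1 →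
      φ (a * s + b * t) ≤ ENNReal.ofReal a * φ s + ENNReal.ofReal b * φ t)
    (heven : ∀ s, φ (-s) = φ s) (hzero : φ 0 = 0) {s t : ℝ} (h : |s| ≤ |t|) : φ s ≤ φ t := by
  have habs : ∀ r, φ |r| = φ r := fun r => by
    rcases abs_choice r with hr | hr <;> simp only [hr, heven]
  rw [← habs s, ← habs t]
  exact monotoneOn_Ici_of_convex_of_map_zero hconvex hzero (abs_nonneg s) (abs_nonneg t) h

end YoungFunction

theorem eq_zero_of_forall_abs_le_mul {x K : ℝ} (h : ∀ β : ℝ, 0 < β → |x| ≤ K * β) : x = 0 := by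
  by_contra hx
  have hx_pos : 0 < |x| := abs_pos.2 hx
  have hK : 0 < |K| + 1 := by positivity
  have hle := h (|x| / (|K| + 1)) (by positivity)
  have hlt : K * (|x| / (|K| + 1)) < |x| := by
    rw [← mul_div_assoc, div_lt_iff₀ hK]
    nlinarith [le_abs_self K]
  linarith

section LIntegral

variable {Z : Type*} [MeasurableSpace Z] {μ : Measure Z}

theorem lintegral_indicator_comp {F : Z → ℝ → ℝ≥0∞} (hF : ∀ z, F z 0 = 0) {B : Set Z}
    (hB : MeasurableSet B) (v : Z → ℝ) :
    ∫⁻ z, F z (B.indicator v z) ∂μ = ∫⁻ z in B, F z (v z) ∂μ := by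
  rw [← lintegral_indicator hB]
  congr 1 with z
  by_cases hz : z ∈ B <;> simp [hz, hF]

theorem tendsto_setLIntegral_zero_of_antitone [SFinite μ] {f : Z → ℝ≥0∞}
    (hf : ∫⁻ z, f z ∂μ ≠ ∞) {A : ℕ → Set Z} (hA : ∀ n, MeasurableSet (A n)) (hanti : Antitone A)
    (hnull : μ (⋂ n, A n) = 0) :
    Tendsto (fun n => ∫⁻ z in A n, f z ∂μ) atTop (𝓝 0) := by
  obtain ⟨g, hgm, hgf, hg⟩ := exists_measurable_le_forall_setLIntegral_eq μ f
  have hν : ∀ s, MeasurableSet s → μ.withDensity g s = ∫⁻ z in s, f z ∂μ := fun s hs => by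
    rw [withDensity_apply _ hs, hg]
  have hν0 : μ.withDensity g (A 0) ≠ ∞ := by
    rw [hν _ (hA 0)]
    exact ne_top_of_le_ne_top hf (setLIntegral_le_lintegral _ _)
  have hlim := tendsto_measure_iInter_atTop (fun n => (hA n).nullMeasurableSet) hanti ⟨0, hν0⟩
  rw [withDensity_apply _ (MeasurableSet.iInter hA), Measure.restrict_eq_zero.2 hnull,
    lintegral_zero_measure] at hlim
  exact hlim.congr fun n => hν _ (hA n)

theorem exists_nat_measure_setOf_lt_inter_lt {S : Set Z} (hS : μ S ≠ ∞) {g : Z → ℝ≥0∞}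
    (hg : Measurable g) (hfin : ∀ z, g z ≠ ∞) {ε : ℝ≥0∞} (hε : 0 < ε) :
    ∃ c : ℕ, μ ({z | c < g z} ∩ S) < ε := by
  have hempty : ⋂ c : ℕ, {z | (c : ℝ≥0∞) < g z} = ∅ :=
    eq_empty_of_forall_notMem fun z hz =>
      let ⟨c, hc⟩ := ENNReal.exists_nat_gt (hfin z)
      (mem_iInter.1 hz c).not_gt hc
  have hlim := tendsto_measure_iInter_atTop (μ := μ.restrict S)
    (fun c : ℕ => (measurableSet_lt measurable_const hg).nullMeasurableSet)
    (fun c c' hcc' z (hz : (c' : ℝ≥0∞) < g z) => (Nat.cast_le.2 hcc').trans_lt hz)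
    ⟨0, ne_top_of_le_ne_top hS
      ((measure_mono (subset_univ _)).trans (Measure.restrict_apply_univ S).le)⟩
  rw [hempty, measure_empty] at hlim
  obtain ⟨c, hc⟩ := (hlim.eventually (gt_mem_nhds hε)).exists
  exact ⟨c, by rwa [← Measure.restrict_apply (measurableSet_lt measurable_const hg)]⟩

theorem exists_subset_measure_diff_le_forall_setLIntegral_ne_top {S : Set Z} (hSm : MeasurableSet S)
    (hS : μ S ≠ ∞) {g : ℕ → Z → ℝ≥0∞} (hg : ∀ m, Measurable (g m)) (hfin : ∀ m z, g m z ≠ ∞)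
    {ε : ℝ≥0∞} (hε : ε ≠ 0) :
    ∃ D ⊆ S, MeasurableSet D ∧ μ (S \ D) ≤ ε ∧ ∀ m, ∫⁻ z in D, g m z ∂μ ≠ ∞ := by
  obtain ⟨ε', hε'0, hε'⟩ := ENNReal.exists_pos_sum_of_countable hε ℕ
  choose c hc using fun m =>
    exists_nat_measure_setOf_lt_inter_lt hS (hg m) (hfin m) (ENNReal.coe_pos.2 (hε'0 m))
  refine ⟨S ∩ ⋂ m, {z | g m z ≤ c m}, inter_subset_left,
    hSm.inter (MeasurableSet.iInter fun m => measurableSet_le (hg m) measurable_const), ?_, ?_⟩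
  · have hsub : S \ ⋂ m, {z | g m z ≤ c m} ⊆ ⋃ m, {z | c m < g m z} ∩ S := by
      intro z ⟨hzS, hz⟩
      obtain ⟨m, hm⟩ := not_forall.1 (mem_iInter.not.1 hz)
      exact mem_iUnion.2 ⟨m, show (c m : ℝ≥0∞) < g m z from not_le.1 hm, hzS⟩
    calc μ (S \ (S ∩ ⋂ m, {z | g m z ≤ c m})) = μ (S \ ⋂ m, {z | g m z ≤ c m}) := by
          rw [sdiff_self_inter]
      _ ≤ ∑' m, μ ({z | c m < g m z} ∩ S) := (measure_mono hsub).trans (measure_iUnion_le _)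
      _ ≤ ∑' m, (ε' m : ℝ≥0∞) := ENNReal.tsum_le_tsum fun m => (hc m).le
      _ ≤ ε := hε'.le
  · intro m
    refine ne_top_of_le_ne_top ?_ (setLIntegral_mono measurable_const
      fun z (hz : z ∈ S ∩ ⋂ m, {z | g m z ≤ c m}) => mem_iInter.1 hz.2 m)
    rw [setLIntegral_const]
    exact ENNReal.mul_ne_top (natCast_ne_top _)
      (ne_top_of_le_ne_top hS (measure_mono inter_subset_left))

theorem setLIntegral_accumulate_ne_top {D : ℕ → Set Z} {f : Z → ℝ≥0∞}
    (hD : ∀ k, ∫⁻ z in D k, f z ∂μ ≠ ∞) (n : ℕ) : ∫⁻ z in accumulate D n, f z ∂μ ≠ ∞ := by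
  induction n with
  | zero => simpa using hD 0
  | succ n ih =>
    rw [accumulate_succ]
    exact ne_top_of_le_ne_top (ENNReal.add_ne_top.2 ⟨ih, hD _⟩) (lintegral_union_le _ _ _)

theorem measure_compl_iUnion_eq_zero_of_measure_spanningSets_diff_le [SigmaFinite μ]
    {D : ℕ → Set Z} {ε : ℕ → ℝ≥0∞} (hε : Tendsto ε atTop (𝓝 0))
    (hD : ∀ n, μ (spanningSets μ n \ D n) ≤ ε n) : μ (⋃ n, D n)ᶜ = 0 := by
  rw [← inter_univ (⋃ n, D n)ᶜ, ← iUnion_spanningSets μ, inter_iUnion]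
  refine measure_iUnion_null fun j => le_antisymm (ge_of_tendsto hε ?_) zero_le
  filter_upwards [eventually_ge_atTop j] with k hjk
  refine (measure_mono fun z (hz : z ∈ (⋃ n, D n)ᶜ ∩ spanningSets μ j) => ?_).trans (hD k)
  exact ⟨monotone_spanningSets μ hjk hz.2, fun hzk => hz.1 (mem_iUnion_of_mem k hzk)⟩

theorem exists_monotone_ae_cover_forall_setLIntegral_ne_top [SigmaFinite μ] {f : ℕ → Z → ℝ≥0∞}
    (hfin : ∀ m z, f m z ≠ ∞) :
    ∃ B : ℕ → Set Z, (∀ n, MeasurableSet (B n)) ∧ Monotone B ∧ μ (⋂ n, (B n)ᶜ) = 0 ∧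
      ∀ n m, ∫⁻ z in B n, f m z ∂μ ≠ ∞ := by
  choose g hgm hgf hg using fun m => exists_measurable_le_forall_setLIntegral_eq μ (f m)
  choose D hDS hDm hD hDg using fun n =>
    exists_subset_measure_diff_le_forall_setLIntegral_ne_top (measurableSet_spanningSets μ n)
      (measure_spanningSets_lt_top μ n).ne hgm (fun m z => ne_top_of_le_ne_top (hfin m z) (hgf m z))
      (ENNReal.inv_ne_zero.2 (natCast_ne_top n))
  refine ⟨accumulate D, fun n => MeasurableSet.biUnion (to_countable _) fun k _ => hDm k,
    monotone_accumulate, ?_, fun n m => ?_⟩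
  · rw [← compl_iUnion, iUnion_accumulate]
    exact measure_compl_iUnion_eq_zero_of_measure_spanningSets_diff_le
      ENNReal.tendsto_inv_nat_nhds_zero hD
  · rw [hg]
    exact setLIntegral_accumulate_ne_top (fun k => hDg k m) n

end LIntegral

theorem stmt15_general {Z : Type*} [MeasurableSpace Z] (R : Measure Z) [SigmaFinite R]
    (ρ : Z → ℝ → ℝ≥0∞)
    -- ρ is a finite Young function
    (hfin : ∀ z s, ρ z s ≠ ⊤)
    (hconvex : ∀ z, ∀ a b s t : ℝ, 0 ≤ a → 0 ≤ b → a + b = 1 →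
      ρ z (a * s + b * t) ≤ ENNReal.ofReal a * ρ z s + ENNReal.ofReal b * ρ z t)
    (heven : ∀ z, ∀ s : ℝ, ρ z (-s) = ρ z s)
    (hzero : ∀ z, ρ z 0 = 0)
    -- the Orlicz space L_ρ and the small Orlicz space E_ρ
    (Lρ Eρ : Set (Z → ℝ))
    (hLρ : Lρ = {w : Z → ℝ | Measurable w ∧ ∃ α : ℝ, 0 < α ∧ ∫⁻ z, ρ z (α * w z) ∂ R ≠ ⊤})
    (hEρ : Eρ = {w : Z → ℝ | Measurable w ∧ ∀ α : ℝ, 0 < α → ∫⁻ z, ρ z (α * w z) ∂ R ≠ ⊤})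
    -- ℓ is a linear functional, continuous w.r.t. the Luxemburg norm
    (ℓ : (Z → ℝ) →ₗ[ℝ] ℝ)
    (hcont : ∃ K : ℝ, ∀ w : Z → ℝ, ∀ β : ℝ, 0 < β →
      (∫⁻ z, ρ z (w z / β) ∂ R) ≤ 1 → |ℓ w| ≤ K * β) :
    (∀ u ∈ Lρ, ∃ A : ℕ → Set Z, (∀ n, MeasurableSet (A n)) ∧ Antitone A ∧
        R (⋂ n, A n) = 0 ∧ ∀ n, ℓ ((A n)ᶜ.indicator u) = 0)
    ↔ (∀ u ∈ Eρ, ℓ u = 0) := by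
  obtain ⟨K, hK⟩ := hcont
  subst hLρ hEρ
  constructor
  · rintro hsing u ⟨hu, huα⟩
    obtain ⟨A, hAm, hA, hA0, hℓA⟩ := hsing u ⟨hu, 1, one_pos, huα 1 one_pos⟩
    refine eq_zero_of_forall_abs_le_mul (K := K) fun β hβ => ?_
    obtain ⟨n, hn⟩ := ((tendsto_setLIntegral_zero_of_antitone (huα β⁻¹ (inv_pos.2 hβ)) hAm hA
      hA0).eventually (gt_mem_nhds one_pos)).exists
    have hsplit : ℓ u = ℓ ((A n).indicator u) := by
      conv_lhs => rw [← (A n).indicator_self_add_compl u]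
      rw [map_add, hℓA n, add_zero]
    rw [hsplit]
    refine hK _ β hβ ?_
    rw [lintegral_indicator_comp (F := fun z s => ρ z (s / β)) (fun z => by rw [zero_div, hzero])
      (hAm n)]
    simpa only [div_eq_inv_mul] using hn.le
  · rintro hvan u ⟨hu, -⟩
    obtain ⟨B, hBm, hB, hB0, hBint⟩ :=
      exists_monotone_ae_cover_forall_setLIntegral_ne_top (μ := R)
        (fun (m : ℕ) z => hfin z (m * u z))
    refine ⟨fun n => (B n)ᶜ, fun n => (hBm n).compl, fun n n' h => compl_subset_compl.2 (hB h),
      hB0, fun n => hvan _ ⟨?_, fun α hα => ?_⟩⟩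
    · rw [compl_compl]; exact hu.indicator (hBm n)
    rw [compl_compl, lintegral_indicator_comp (F := fun z s => ρ z (α * s))
      (fun z => by rw [mul_zero, hzero]) (hBm n)]
    refine ne_top_of_le_ne_top (hBint n ⌈α⌉₊) (lintegral_mono fun z => ?_)
    refine apply_le_apply_of_abs_le (hconvex z) (heven z) (hzero z) ?_
    rw [abs_mul, abs_mul, abs_of_pos hα, Nat.abs_cast]
    gcongr
    exact Nat.le_ceil α

/-- Proposition 2.4: for a finite Young function `ρ` on a σ-finite measure space, a
continuous linear functional `ℓ` on the Orlicz space `L_ρ` is singular (for each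
`u ∈ L_ρ` there is a decreasing sequence of measurable sets `A_n` with `R(⋂ A_n) = 0`
and `⟨ℓ, u 1_{Z∖A_n}⟩ = 0` for all `n`) if and only if `ℓ` vanishes on the small Orlicz
space `E_ρ`. -/
theorem stmt15 {Z : Type*} [MeasurableSpace Z] (R : Measure Z) [SigmaFinite R]
    (ρ : Z → ℝ → ℝ≥0∞)
    -- ρ is a finite Young function
    (hfin : ∀ z s, ρ z s ≠ ⊤)
    (hconvex : ∀ z, ∀ a b s t : ℝ, 0 ≤ a → 0 ≤ b → a + b = 1 →
      ρ z (a * s + b * t) ≤ ENNReal.ofReal a * ρ z s + ENNReal.ofReal b * ρ z t)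
    (heven : ∀ z, ∀ s : ℝ, ρ z (-s) = ρ z s)
    (hzero : ∀ z, ρ z 0 = 0)
    (hpos : ∀ z, ∃ s : ℝ, 0 < s ∧ 0 < ρ z s)
    -- the Orlicz space L_ρ and the small Orlicz space E_ρ
    (Lρ Eρ : Set (Z → ℝ))
    (hLρ : Lρ = {w : Z → ℝ | Measurable w ∧ ∃ α : ℝ, 0 < α ∧ ∫⁻ z, ρ z (α * w z) ∂ R ≠ ⊤})
    (hEρ : Eρ = {w : Z → ℝ | Measurable w ∧ ∀ α : ℝ, 0 < α → ∫⁻ z, ρ z (α * w z) ∂ R ≠ ⊤})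
    -- ℓ is a linear functional, continuous w.r.t. the Luxemburg norm
    (ℓ : (Z → ℝ) →ₗ[ℝ] ℝ)
    (hcont : ∃ K : ℝ, ∀ w : Z → ℝ, ∀ β : ℝ, 0 < β →
      (∫⁻ z, ρ z (w z / β) ∂ R) ≤ 1 → |ℓ w| ≤ K * β) :
    (∀ u ∈ Lρ, ∃ A : ℕ → Set Z, (∀ n, MeasurableSet (A n)) ∧ Antitone A ∧
        R (⋂ n, A n) = 0 ∧ ∀ n, ℓ ((A n)ᶜ.indicator u) = 0)
    ↔ (∀ u ∈ Eρ, ℓ u = 0) :=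
  stmt15_general R ρ hfin hconvex heven hzero Lρ Eρ hLρ hEρ ℓ hcont
end

section
/- Let {X_n} be random variables in a Hausdorff topological space X obeying the large deviation principle with good rate function J, and let (C_δ)_{δ>0} be a decreasing family of closed sets with C = ⋂_δ C_δ closed, J(C) < ∞, ℙ(X_n ∈ C_δ) > 0 for all n, δ, and C ⊆ int C_δ for all δ. Then for every closed set F ⊆ X, limsup_{δ→0} limsup_{n→∞} (1/n) log ℙ(X_n ∈ F | X_n ∈ C_δ) ≤ −(J(F ∩ C) − J(C)). -/
open MeasureTheory Filter Topology ENNReal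

/-! Write the conditional probability as a ratio. The LDP upper bound on the closed set
`F ∩ C δ` controls the numerator by `-J(F ∩ C δ)`, and the lower bound on the open set
`interior (C δ) ⊇ C` controls the denominator from below by `-J(C)`, which is finite; so for
fixed `δ` the inner limsup is at most `-(J(F ∩ C δ) - J(C))`. Letting `δ → 0`,
`J(F ∩ C δ) → J(F ∩ C)`: for `a < J(F ∩ C)` the compact sublevel set `{J ≤ a}` misses the
decreasing closed sets `F ∩ C δ` in the limit, hence misses one of them. -/

lemma EReal.limsup_sub_le {α : Type*} {f : Filter α} {u v : α → EReal}
    (hu : limsup u f ≠ ⊤) (hv : liminf v f ≠ ⊥) :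
    limsup (u - v) f ≤ limsup u f - liminf v f := by
  rw [sub_eq_add_neg, sub_eq_add_neg, ← EReal.limsup_neg]
  refine EReal.limsup_add_le (.inr ?_) (.inl hu)
  rwa [EReal.limsup_neg, ne_eq, EReal.neg_eq_top_iff]

-- No side conditions: `0 * ⊤ = 0` matches `⊥ + ⊤ = ⊥` in `EReal`.
lemma ENNReal.log_div (x y : ℝ≥0∞) : log (x / y) = log x - log y := by
  rw [div_eq_mul_inv, log_mul_add, log_inv, sub_eq_add_neg]

lemma limsup_mul_log_div_le {ι : Type*} {l : Filter ι} {k : ι → ℝ} (hk : ∀ i, 0 ≤ k i)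
    {a b : ι → ℝ≥0∞} (ha : limsup (fun i => (k i : EReal) * log (a i)) l ≠ ⊤)
    (hb : liminf (fun i => (k i : EReal) * log (b i)) l ≠ ⊥) :
    limsup (fun i => (k i : EReal) * log (a i / b i)) l
      ≤ limsup (fun i => (k i : EReal) * log (a i)) l
        - liminf (fun i => (k i : EReal) * log (b i)) l := by
  have hsplit : (fun i => (k i : EReal) * log (a i / b i))
      = (fun i => (k i : EReal) * log (a i)) - fun i => (k i : EReal) * log (b i) := by
    ext i
    rw [Pi.sub_apply, log_div,
      EReal.mul_sub_of_nonneg_of_ne_top (EReal.coe_nonneg.2 (hk i)) (EReal.coe_ne_top _)]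
  rw [hsplit]
  exact EReal.limsup_sub_le ha hb

lemma neg_iInf_le_liminf_log_of_subset_interior {X : Type*} [TopologicalSpace X]
    [MeasurableSpace X] {μ : ℕ → Measure X} {J : X → ℝ≥0∞}
    (hlower : ∀ G : Set X, IsOpen G →
      -(((⨅ x ∈ G, J x : ℝ≥0∞)) : EReal)
        ≤ liminf (fun n : ℕ => ((1 / (n : ℝ) : ℝ) : EReal) * log (μ n G)) atTop)
    {A B : Set X} (hAB : A ⊆ interior B) :
    -(((⨅ x ∈ A, J x : ℝ≥0∞)) : EReal)
      ≤ liminf (fun n : ℕ => ((1 / (n : ℝ) : ℝ) : EReal) * log (μ n B)) atTop := calc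
  _ ≤ -(((⨅ x ∈ interior B, J x : ℝ≥0∞)) : EReal) :=
    EReal.neg_le_neg_iff.2 <| EReal.coe_ennreal_le_coe_ennreal_iff.2 <| biInf_mono hAB
  _ ≤ _ := hlower _ isOpen_interior
  _ ≤ _ := liminf_le_liminf <| .of_forall fun n => by gcongr; exact interior_subset

theorem tendsto_iInf_inter_nhdsGT {X : Type*} [TopologicalSpace X] {J : X → ℝ≥0∞}
    (hJ : ∀ c : ℝ≥0∞, c ≠ ⊤ → IsCompact {x : X | J x ≤ c})
    {F : Set X} (hF : IsClosed F) {C : ℝ → Set X} (hC : ∀ δ > (0:ℝ), IsClosed (C δ))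
    (hmono : ∀ δ₁ δ₂ : ℝ, 0 < δ₁ → δ₁ ≤ δ₂ → C δ₁ ⊆ C δ₂) :
    Tendsto (fun δ => ⨅ x ∈ F ∩ C δ, J x) (𝓝[>] 0)
      (𝓝 (⨅ x ∈ F ∩ ⋂ (δ : ℝ) (_ : 0 < δ), C δ, J x)) := by
  set L := ⨅ x ∈ F ∩ ⋂ (δ : ℝ) (_ : 0 < δ), C δ, J x
  have heventually : ∀ a < L, ∀ᶠ δ in 𝓝[>] 0, a ≤ ⨅ x ∈ F ∩ C δ, J x := by
    intro a ha
    have hempty : ({x | J x ≤ a} ∩ ⋂ d : {d : ℝ // 0 < d}, F ∩ C d) = ∅ := by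
      refine Set.eq_empty_of_forall_notMem fun x ⟨hxa, hx⟩ => ?_
      simp only [Set.mem_iInter, Subtype.forall] at hx
      have hxL : L ≤ J x :=
        biInf_le J ⟨(hx 1 one_pos).1, Set.mem_iInter₂.2 fun δ hδ => (hx δ hδ).2⟩
      exact (ha.trans_le (hxL.trans hxa)).false
    have hmono' : Monotone fun d : {d : ℝ // 0 < d} => F ∩ C d :=
      fun d e hde => Set.inter_subset_inter_right _ (hmono _ _ d.2 hde)
    obtain ⟨⟨d, hd0⟩, hd⟩ := (hJ a (ne_top_of_lt ha)).elim_directed_family_closed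
      (fun d : {d : ℝ // 0 < d} => F ∩ C d) (fun d => hF.inter (hC d d.2)) hempty
      hmono'.directed_ge
    filter_upwards [Ioc_mem_nhdsGT hd0] with δ hδ
    refine le_iInf₂ fun x hx => le_of_not_gt fun hxa => ?_
    exact (Set.eq_empty_iff_forall_notMem.1 hd) x ⟨hxa.le, hx.1, hmono _ _ hδ.1 hδ.2 hx.2⟩
  refine tendsto_order.2 ⟨fun a ha => ?_, fun b hb => ?_⟩
  · obtain ⟨b, hab, hbL⟩ := exists_between ha
    exact (heventually b hbL).mono fun δ h => hab.trans_le h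
  · filter_upwards [self_mem_nhdsWithin] with δ hδ
    refine lt_of_le_of_lt (biInf_mono fun x hx => ⟨hx.1, ?_⟩) hb
    exact Set.mem_iInter₂.1 hx.2 δ hδ

lemma EReal.continuous_neg_sub_coe (c : ℝ) : Continuous fun y : EReal => -(y - c) := by
  have hsub : (fun y : EReal => -(y - c)) = fun y => -y + (c : EReal) := funext fun y =>
    EReal.neg_sub (.inr (EReal.coe_ne_bot c)) (.inr (EReal.coe_ne_top c))
  rw [hsub, continuous_iff_continuousAt]
  intro y
  exact ContinuousAt.comp (f := fun y : EReal => (-y, (c : EReal)))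
    (EReal.continuousAt_add (.inr (EReal.coe_ne_bot c)) (.inr (EReal.coe_ne_top c)))
    (continuous_neg.continuousAt.prodMk continuousAt_const)

theorem stmt17_general {X : Type*} [TopologicalSpace X] [MeasurableSpace X]
    (μ : ℕ → Measure X)
    (J : X → ℝ≥0∞)
    -- J is a good rate function
    (hJcomp : ∀ c : ℝ≥0∞, c ≠ ⊤ → IsCompact {x : X | J x ≤ c})
    -- the large deviation principle
    (hupper : ∀ F : Set X, IsClosed F →
      limsup (fun n : ℕ => ((1 / (n : ℝ) : ℝ) : EReal) * ENNReal.log (μ n F)) atTop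
        ≤ -(((⨅ x ∈ F, J x : ℝ≥0∞)) : EReal))
    (hlower : ∀ G : Set X, IsOpen G →
      -(((⨅ x ∈ G, J x : ℝ≥0∞)) : EReal)
        ≤ liminf (fun n : ℕ => ((1 / (n : ℝ) : ℝ) : EReal) * ENNReal.log (μ n G)) atTop)
    -- the conditioning sets
    (C : ℝ → Set X) (hCcl : ∀ δ > (0:ℝ), IsClosed (C δ))
    (hdec : ∀ δ₁ δ₂ : ℝ, 0 < δ₁ → δ₁ ≤ δ₂ → C δ₁ ⊆ C δ₂)
    (Cset : Set X) (hCset : Cset = ⋂ (δ : ℝ) (_ : 0 < δ), C δ)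
    (hJC : (⨅ x ∈ Cset, J x) ≠ ⊤)
    (hint : ∀ δ > (0:ℝ), Cset ⊆ interior (C δ)) :
    ∀ F : Set X, IsClosed F →
      limsup (fun δ : ℝ =>
          limsup (fun n : ℕ => ((1 / (n : ℝ) : ℝ) : EReal)
            * ENNReal.log (μ n (F ∩ C δ) / μ n (C δ))) atTop) (𝓝[>] (0:ℝ))
        ≤ -((((⨅ x ∈ F ∩ Cset, J x : ℝ≥0∞)) : EReal)
            - (((⨅ x ∈ Cset, J x : ℝ≥0∞)) : EReal)) := by
  intro F hF
  rw [← EReal.coe_ennreal_toReal hJC]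
  set c : ℝ := (⨅ x ∈ Cset, J x).toReal
  have hcond : ∀ δ > (0:ℝ),
      limsup (fun n : ℕ => ((1 / (n : ℝ) : ℝ) : EReal) * log (μ n (F ∩ C δ) / μ n (C δ))) atTop
        ≤ -(((⨅ x ∈ F ∩ C δ, J x : ℝ≥0∞) : EReal) - c) := by
    intro δ hδ
    have hup := hupper _ (hF.inter (hCcl δ hδ))
    have hlow := neg_iInf_le_liminf_log_of_subset_interior hlower (hint δ hδ)
    rw [← EReal.coe_ennreal_toReal hJC] at hlow
    calc _ ≤ _ := limsup_mul_log_div_le (fun n => by positivity)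
          (ne_top_of_le_ne_top (by simp) hup) (ne_bot_of_le_ne_bot (by simp) hlow)
      _ ≤ _ := EReal.sub_le_sub hup hlow
      _ = _ := by
        rw [EReal.neg_sub (.inr (EReal.coe_ne_bot c)) (.inr (EReal.coe_ne_top c)), sub_eq_add_neg,
          neg_neg]
  have hlim := tendsto_iInf_inter_nhdsGT hJcomp hF hCcl hdec
  rw [← hCset] at hlim
  calc _ ≤ limsup (fun δ => -(((⨅ x ∈ F ∩ C δ, J x : ℝ≥0∞) : EReal) - c)) (𝓝[>] 0) :=
        limsup_le_limsup (eventually_nhdsWithin_of_forall hcond)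
    _ = _ := ((EReal.continuous_neg_sub_coe c).tendsto _ |>.comp <|
        (continuous_coe_ennreal_ereal.tendsto _).comp hlim).limsup_eq

/-- Conditional large deviation upper bound (Proposition B.1): if `{X_n}` (with laws
`μ n`) obeys the LDP with good rate function `J` and `(C δ)` is a decreasing family of
closed sets with `C = ⋂ C δ`, `J(C) < ∞`, `ℙ(X_n ∈ C δ) > 0` and `C ⊆ int (C δ)`, then
for every closed `F`,
`limsup_{δ→0} limsup_n (1/n) log ℙ(X_n ∈ F | X_n ∈ C δ) ≤ −(J(F ∩ C) − J(C))`. -/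
theorem stmt17 {X : Type*} [TopologicalSpace X] [T2Space X] [MeasurableSpace X]
    (μ : ℕ → Measure X) (hμ : ∀ n, IsProbabilityMeasure (μ n))
    (J : X → ℝ≥0∞)
    -- J is a good rate function
    (hJlsc : LowerSemicontinuous J)
    (hJcomp : ∀ c : ℝ≥0∞, c ≠ ⊤ → IsCompact {x : X | J x ≤ c})
    -- the large deviation principle
    (hupper : ∀ F : Set X, IsClosed F →
      limsup (fun n : ℕ => ((1 / (n : ℝ) : ℝ) : EReal) * ENNReal.log (μ n F)) atTop
        ≤ -(((⨅ x ∈ F, J x : ℝ≥0∞)) : EReal))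
    (hlower : ∀ G : Set X, IsOpen G →
      -(((⨅ x ∈ G, J x : ℝ≥0∞)) : EReal)
        ≤ liminf (fun n : ℕ => ((1 / (n : ℝ) : ℝ) : EReal) * ENNReal.log (μ n G)) atTop)
    -- the conditioning sets
    (C : ℝ → Set X) (hCcl : ∀ δ > (0:ℝ), IsClosed (C δ))
    (hdec : ∀ δ₁ δ₂ : ℝ, 0 < δ₁ → δ₁ ≤ δ₂ → C δ₁ ⊆ C δ₂)
    (Cset : Set X) (hCset : Cset = ⋂ (δ : ℝ) (_ : 0 < δ), C δ) (hCsetcl : IsClosed Cset)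
    (hJC : (⨅ x ∈ Cset, J x) ≠ ⊤)
    (hpos : ∀ n : ℕ, ∀ δ > (0:ℝ), 0 < μ n (C δ))
    (hint : ∀ δ > (0:ℝ), Cset ⊆ interior (C δ)) :
    ∀ F : Set X, IsClosed F →
      limsup (fun δ : ℝ =>
          limsup (fun n : ℕ => ((1 / (n : ℝ) : ℝ) : EReal)
            * ENNReal.log (μ n (F ∩ C δ) / μ n (C δ))) atTop) (𝓝[>] (0:ℝ))
        ≤ -((((⨅ x ∈ F ∩ Cset, J x : ℝ≥0∞)) : EReal)
            - (((⨅ x ∈ Cset, J x : ℝ≥0∞)) : EReal)) :=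
  stmt17_general μ J hJcomp hupper hlower C hCcl hdec Cset hCset hJC hint
end
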